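/- If A is a proper subset of Y and k ∈ −core 0⁺A, then φ_{A,k} is finite-valued on all of Y (i.e., φ_{A,k}(y) ∈ ℝ for every y ∈ Y). -/

import Mathlib

/-- `phi A k y = inf { t : ℝ | y ∈ A + t • k }`, valued in `EReal`
(`⊤` plays the role of the symbol `ν = inf ∅`, `⊥` is `-∞`). -/
noncomputable def phi {Y : Type*} [AddCommGroup Y] [Module ℝ Y]
    (A : Set Y) (k : Y) (y : Y) : EReal :=
  sInf ((fun t : ℝ => (t : EReal)) '' {t : ℝ | y - t • k ∈ A})

/-- The algebraic interior (core) of a set. -/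
def algCore {Y : Type*} [AddCommGroup Y] [Module ℝ Y] (A : Set Y) : Set Y :=
  {a | a ∈ A ∧ ∀ y : Y, ∃ t : ℝ, 0 < t ∧ ∀ s : ℝ, 0 ≤ s → s ≤ t → a + s • y ∈ A}

/-- The recession cone `0⁺A`. -/
def recCone {Y : Type*} [AddCommGroup Y] [Module ℝ Y] (A : Set Y) : Set Y :=
  {u | ∀ a ∈ A, ∀ t : ℝ, 0 ≤ t → a + t • u ∈ A}

/-- `A` is `k`-directionally closed. -/
def DirClosed {Y : Type*} [AddCommGroup Y] [Module ℝ Y] (A : Set Y) (k : Y) : Prop :=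
  ∀ y : Y, (∃ t : ℕ → ℝ, (∀ n, 0 < t n) ∧ Antitone t ∧
    Filter.Tendsto t Filter.atTop (nhds 0) ∧ ∀ n, y - t n • k ∈ A) → y ∈ A

/-- `A` is algebraically closed. -/
def AlgClosed {Y : Type*} [AddCommGroup Y] [Module ℝ Y] (A : Set Y) : Prop :=
  ∀ a ∈ A, ∀ y : Y, (∀ l : ℝ, 0 < l → l < 1 → a + l • (y - a) ∈ A) → y ∈ A

/-- `C` is a cone: closed under nonnegative scalar multiplication. -/
def IsCone {Y : Type*} [AddCommGroup Y] [Module ℝ Y] (C : Set Y) : Prop :=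
  ∀ l : ℝ, 0 ≤ l → ∀ c ∈ C, l • c ∈ C

/-! Since `-k` lies in the core of `0⁺A`, for every direction `v` some `-k + s • v` with `s > 0` is a
recession direction of `A`, so from any `w ∈ A` one reaches `w + v - s⁻¹ • k ∈ A`. With `w = a ∈ A`
and `v = y - a` this puts `s⁻¹` into `{t | y - t • k ∈ A}`; with `v = z - y` for some `z ∉ A` it
keeps `-s⁻¹` out of that set, which is upward closed because `-k ∈ 0⁺A`, so `-s⁻¹` bounds it below. -/

section

variable {Y : Type*} [AddCommGroup Y] [Module ℝ Y] {A : Set Y} {k : Y}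

theorem add_sub_inv_smul_mem_of_neg_add_smul_mem_recCone {v w : Y} {s : ℝ} (hs : 0 < s)
    (hu : -k + s • v ∈ recCone A) (hw : w ∈ A) : w + v - s⁻¹ • k ∈ A := by
  convert hu w hw s⁻¹ (inv_nonneg.2 hs.le) using 1
  rw [smul_add, smul_smul, inv_mul_cancel₀ hs.ne', one_smul, smul_neg]
  abel

theorem sub_smul_mem_of_le (hk : -k ∈ recCone A) {y : Y} {t t' : ℝ} (ht : y - t • k ∈ A)
    (htt' : t ≤ t') : y - t' • k ∈ A := by
  convert hk _ ht (t' - t) (sub_nonneg.2 htt') using 1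
  rw [smul_neg, sub_smul]
  abel

theorem nonempty_setOf_sub_smul_mem (hk : -k ∈ algCore (recCone A)) (hA : A.Nonempty) (y : Y) :
    {t : ℝ | y - t • k ∈ A}.Nonempty := by
  obtain ⟨a, ha⟩ := hA
  obtain ⟨s, hs, hseg⟩ := hk.2 (y - a)
  refine ⟨s⁻¹, ?_⟩
  simpa using add_sub_inv_smul_mem_of_neg_add_smul_mem_recCone hs (hseg s hs.le le_rfl) ha

theorem bddBelow_setOf_sub_smul_mem (hk : -k ∈ algCore (recCone A)) (hA : A ≠ Set.univ) (y : Y) :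
    BddBelow {t : ℝ | y - t • k ∈ A} := by
  obtain ⟨z, hz⟩ := Set.ne_univ_iff_exists_notMem A |>.1 hA
  obtain ⟨s, hs, hseg⟩ := hk.2 (z - y)
  refine ⟨-s⁻¹, fun t ht => le_of_not_gt fun hlt => hz ?_⟩
  have hw : y + s⁻¹ • k ∈ A := by simpa using sub_smul_mem_of_le hk.1 ht hlt.le
  convert add_sub_inv_smul_mem_of_neg_add_smul_mem_recCone hs (hseg s hs.le le_rfl) hw using 1
  abel

theorem phi_eq_coe_sInf {y : Y} (hne : {t : ℝ | y - t • k ∈ A}.Nonempty)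
    (hbdd : BddBelow {t : ℝ | y - t • k ∈ A}) :
    phi A k y = ((sInf {t : ℝ | y - t • k ∈ A} : ℝ) : EReal) :=
  (Monotone.map_csInf_of_continuousAt continuous_coe_real_ereal.continuousAt
    (fun _ _ => EReal.coe_le_coe) hne hbdd).symm

end

theorem phi_finite_of_core_recCone_general {Y : Type*} [AddCommGroup Y] [Module ℝ Y]
    (A : Set Y) (hA : A.Nonempty) (hAne : A ≠ Set.univ) (k : Y)
    (hcore : -k ∈ algCore (recCone A)) :
    ∀ y : Y, ∃ r : ℝ, phi A k y = (r : EReal) := fun y =>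
  ⟨_, phi_eq_coe_sInf (nonempty_setOf_sub_smul_mem hcore hA y)
    (bddBelow_setOf_sub_smul_mem hcore hAne y)⟩

theorem phi_finite_of_core_recCone {Y : Type*} [AddCommGroup Y] [Module ℝ Y]
    (A : Set Y) (hA : A.Nonempty) (hAne : A ≠ Set.univ) (k : Y) (hk : k ≠ 0)
    (hcore : -k ∈ algCore (recCone A)) :
    ∀ y : Y, ∃ r : ℝ, phi A k y = (r : EReal) :=
  phi_finite_of_core_recCone_general A hA hAne k hcore
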